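/- Let N ≥ 2, n ≥ 1, and M ∈ {1, …, n}. The number of words w ∈ W_n^{(N)} for which ρ∞(w, wst) ≥ (2M + 2)/n is at most 2·N²·(N·n)!/((n − M)!·(n + M)!·(n!)^{N−2}) (that is, 2N² times the multinomial coefficient with parts n − M, n + M, n, …, n). -/

import Mathlib

/-- The number of occurrences of the letter `k` among the first `j` letters of the word
`w : Fin m → Fin N`. -/
def countLetterN (m N : ℕ) (w : Fin m → Fin N) (k : Fin N) (j : ℕ) : ℕ :=
  (Finset.univ.filter fun i : Fin m => (i : ℕ) < j ∧ w i = k).card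

/-- `w` is a word in `W_n^{(N)}`: a word of length `N·n` in the `N` letters `A₁, …, A_N`
(encoded as `Fin N`) containing exactly `n` occurrences of each letter. -/
def IsWordN (N n : ℕ) (w : Fin (N * n) → Fin N) : Prop :=
  ∀ k : Fin N, (Finset.univ.filter fun i : Fin (N * n) => w i = k).card = n

/-- `ρ∞(w, v) = (2/n)·max_{1 ≤ k ≤ N, 1 ≤ j ≤ N·n} |w_{A_k}[j] − v_{A_k}[j]|`. -/
noncomputable def rhoInfN (N n : ℕ) (w v : Fin (N * n) → Fin N) : ℝ :=
  (2 / (n : ℝ)) * (((Finset.Icc 1 (N * n)) ×ˢ (Finset.univ : Finset (Fin N))).sup fun p =>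
    ((countLetterN (N * n) N w p.2 p.1 : ℤ) - (countLetterN (N * n) N v p.2 p.1 : ℤ)).natAbs :
      ℕ)

/-- The standard word `wst ∈ W_n^{(N)}`: the word `A₁A₂…A_N` repeated `n` times. -/
def wstN (N n : ℕ) (hN : 0 < N) : Fin (N * n) → Fin N :=
  fun i => ⟨(i : ℕ) % N, Nat.mod_lt _ hN⟩

/-!
If `ρ∞(w, wst) ≥ (2M + 2)/n`, some letter count of a prefix of `w` is off by more than `M` from
that of the standard word. The prefix counts of the standard word differ pairwise by at most one
and all prefix counts add up to the prefix length, so in that prefix some letter `a` leads some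
letter `b` by at least `M`. Swapping `a` and `b` after the first time the lead reaches `M`
(the reflection principle) is an involution on such words, and it produces words with `n + M`
letters `a`, `n - M` letters `b` and `n` of every other letter; there are at most
`(N n)! / ((n - M)! (n + M)! (n!)^(N-2))` of those. Finally there are `N²` ordered pairs `(a, b)`.
-/

open Finset Nat

section Multinomial

variable {α ι : Type*} [Fintype α] [DecidableEq ι]

theorem exists_perm_comp_eq_of_card_fiber_eq {v w : α → ι}
    (h : ∀ c, Fintype.card {i // v i = c} = Fintype.card {i // w i = c}) :
    ∃ g : Equiv.Perm α, v ∘ g = w := by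
  let e c : {i // w i = c} ≃ {i // v i = c} := Fintype.equivOfCardEq (h c).symm
  refine ⟨(Equiv.sigmaFiberEquiv w).symm.trans
    ((Equiv.sigmaCongrRight e).trans (Equiv.sigmaFiberEquiv v)), funext fun i => ?_⟩
  exact (e (w i) ⟨i, rfl⟩).2

theorem card_filter_card_fiber_eq_mul_prod_factorial_le [DecidableEq α] [Fintype ι]
    (cnt : ι → ℕ) :
    #{v : α → ι | ∀ c, #{i | v i = c} = cnt c} * ∏ c, (cnt c)! ≤ (Fintype.card α)! := by
  rcases eq_empty_or_nonempty {v : α → ι | ∀ c, #{i | v i = c} = cnt c} with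
    hT | ⟨v₀, hv₀⟩
  · simp [hT]
  simp only [mem_filter, mem_univ, true_and] at hv₀
  -- Orbit-stabiliser: each fibre of `g ↦ v₀ ∘ g` contains a coset of `v₀`'s stabiliser.
  rw [mul_comm, ← Fintype.card_perm, ← Finset.card_univ]
  refine mul_card_image_le_card_of_maps_to (f := fun g : Equiv.Perm α => v₀ ∘ g)
    (fun g _ => ?_) _ fun v hv => ?_
  · simp only [mem_filter, mem_univ, true_and, Function.comp_apply]
    exact fun c => (card_equiv g (by simp)).trans (hv₀ c)
  simp only [mem_filter, mem_univ, true_and] at hv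
  obtain ⟨g₁, hg₁⟩ := exists_perm_comp_eq_of_card_fiber_eq (v := v₀) (w := v)
    (by simp [Fintype.card_subtype, hv₀, hv])
  calc ∏ c, (cnt c)! = Fintype.card {g : Equiv.Perm α // v₀ ∘ g = v₀} := by
        rw [DomMulAct.stabilizer_card]
        simp only [Fintype.card_subtype, hv₀]
    _ ≤ Fintype.card {g : Equiv.Perm α // v₀ ∘ g = v} :=
        Fintype.card_le_of_injective
          (fun g => ⟨g.1 * g₁, hg₁ ▸ congrArg (· ∘ g₁) g.2⟩)
          fun g h hgh => Subtype.ext (mul_right_cancel (congrArg Subtype.val hgh))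
    _ = #{g : Equiv.Perm α | v₀ ∘ g = v} := Fintype.card_subtype _

end Multinomial

section PrefixCounts

variable {m N : ℕ} (w : Fin m → Fin N) (c : Fin N)

theorem countLetterN_zero : countLetterN m N w c 0 = 0 := by
  simp [countLetterN]

theorem countLetterN_mono : Monotone (countLetterN m N w c) := fun _ _ hj =>
  card_le_card (monotone_filter_right _ fun _ _ => And.imp_left fun h => h.trans_le hj)

theorem countLetterN_succ_le (j : ℕ) :
    countLetterN m N w c (j + 1) ≤ countLetterN m N w c j + 1 :=
  calc countLetterN m N w c (j + 1)
      ≤ #(({i | (i : ℕ) < j ∧ w i = c} : Finset (Fin m)) ∪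
          ({i | (i : ℕ) = j} : Finset (Fin m))) :=
        card_le_card fun i => by
          simp only [mem_union, mem_filter, mem_univ, true_and]
          exact fun h => (Nat.lt_succ_iff_lt_or_eq.1 h.1).imp (⟨·, h.2⟩) id
    _ ≤ countLetterN m N w c j + 1 := (card_union_le _ _).trans <| Nat.add_le_add_left
        (card_le_one.2 fun _ hi _ hk => by simp only [mem_filter] at hi hk; omega) _

variable {w} in
theorem countLetterN_congr {v : Fin m → Fin N} {j : ℕ}
    (h : ∀ i : Fin m, (i : ℕ) < j → w i = v i) :
    countLetterN m N w c j = countLetterN m N v c j := by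
  unfold countLetterN
  congr 1
  exact filter_congr fun i _ => and_congr_right fun hi => by rw [h i hi]

theorem countLetterN_add_card_filter_le_eq (j : ℕ) :
    countLetterN m N w c j + #{i : Fin m | j ≤ (i : ℕ) ∧ w i = c} = #{i | w i = c} := by
  rw [countLetterN,
    ← card_filter_add_card_filter_not (s := {i | w i = c}) (fun i => (i : ℕ) < j),
    filter_filter, filter_filter]
  congr 2 <;> ext i <;> simp only [mem_filter, mem_univ, true_and, not_lt] <;> tauto

theorem sum_countLetterN (j : ℕ) : ∑ c, countLetterN m N w c j = min m j := by
  rw [← Fin.card_filter_val_lt, card_eq_sum_card_fiberwise fun i _ => mem_univ (w i)]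
  simp only [countLetterN, filter_filter]

end PrefixCounts

theorem countLetterN_wstN {N n : ℕ} (hN : 0 < N) (k : Fin N) {j : ℕ} (hj : j ≤ N * n) :
    countLetterN (N * n) N (wstN N n hN) k j = j / N + if (k : ℕ) < j % N then 1 else 0 := by
  have hk : (k : ℕ) % N = k := Nat.mod_eq_of_lt k.2
  rw [← hk, ← Nat.count_modEq_card _ hN, Nat.count_eq_card_filter_range, countLetterN]
  refine card_bij (fun i _ => (i : ℕ)) (fun i hi => ?_) (fun _ _ _ _ => Fin.ext) fun x hx => ?_
  · simp only [mem_filter, mem_univ, true_and, mem_range, wstN, Fin.ext_iff] at hi ⊢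
    exact ⟨hi.1, by rw [Nat.ModEq, hi.2, hk]⟩
  · simp only [mem_filter, mem_range] at hx
    refine ⟨⟨x, by omega⟩, ?_, rfl⟩
    simp only [mem_filter, mem_univ, true_and, wstN, Fin.ext_iff]
    exact ⟨hx.1, by simpa [Nat.ModEq, hk] using hx.2⟩

theorem countLetterN_wstN_le_add_one {N n : ℕ} (hN : 0 < N) (k l : Fin N) {j : ℕ}
    (hj : j ≤ N * n) :
    countLetterN (N * n) N (wstN N n hN) k j ≤ countLetterN (N * n) N (wstN N n hN) l j + 1 := by
  rw [countLetterN_wstN hN k hj, countLetterN_wstN hN l hj]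
  split_ifs <;> omega

theorem exists_add_le_of_sum_eq {ι : Type*} [Fintype ι] {x y : ι → ℕ}
    (hsum : ∑ i, x i = ∑ i, y i) (hy : ∀ k l, y k ≤ y l + 1) {k : ι} {M : ℕ}
    (hk : M + 1 ≤ ((x k : ℤ) - y k).natAbs) : ∃ a b, x b + M ≤ x a := by
  rcases le_total (y k) (x k) with hyx | hxy
  · obtain ⟨b, -, hb⟩ := exists_le_of_sum_le ⟨k, mem_univ k⟩ hsum.le
    exact ⟨k, b, by have := hy b k; omega⟩
  · obtain ⟨a, -, ha⟩ := exists_le_of_sum_le ⟨k, mem_univ k⟩ hsum.ge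
    exact ⟨a, k, by have := hy k a; omega⟩

theorem exists_le_natAbs_of_le_rhoInfN {N n r : ℕ} (hn : 0 < n) (hr : 0 < r)
    {w v : Fin (N * n) → Fin N} (h : 2 * r / (n : ℝ) ≤ rhoInfN N n w v) :
    ∃ j ≤ N * n, ∃ k,
      r ≤ ((countLetterN (N * n) N w k j : ℤ) - countLetterN (N * n) N v k j).natAbs := by
  have hr' : (r : ℝ) ≤ (Icc 1 (N * n) ×ˢ univ).sup fun p : ℕ × Fin N =>
      ((countLetterN (N * n) N w p.2 p.1 : ℤ) - countLetterN (N * n) N v p.2 p.1).natAbs := by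
    rw [rhoInfN, div_mul_eq_mul_div, div_le_div_iff_of_pos_right (by positivity)] at h
    linarith
  obtain ⟨⟨j, k⟩, hjk, hle⟩ := (Finset.le_sup_iff hr).1 (Nat.cast_le.1 hr')
  exact ⟨j, (mem_Icc.1 (mem_product.1 hjk).1).2, k, hle⟩

theorem exists_lead_of_le_rhoInfN_wstN {N n M : ℕ} (hN : 0 < N) (hn : 0 < n)
    {w : Fin (N * n) → Fin N} (h : (2 * M + 2 : ℝ) / n ≤ rhoInfN N n w (wstN N n hN)) :
    ∃ a b : Fin N, ∃ j, countLetterN (N * n) N w b j + M ≤ countLetterN (N * n) N w a j := by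
  obtain ⟨j, hj, k, hk⟩ := exists_le_natAbs_of_le_rhoInfN (r := M + 1) hn M.succ_pos
    (by convert h using 2; push_cast; ring)
  obtain ⟨a, b, hab⟩ := exists_add_le_of_sum_eq
    (by rw [sum_countLetterN, sum_countLetterN] : ∑ c, countLetterN _ N w c j = _)
    (fun k l => countLetterN_wstN_le_add_one hN k l hj) hk
  exact ⟨a, b, j, hab⟩

section Reflection

variable {m N : ℕ}

def swapFrom (t : ℕ) (a b : Fin N) (w : Fin m → Fin N) : Fin m → Fin N :=
  fun i => if (i : ℕ) < t then w i else Equiv.swap a b (w i)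

theorem swapFrom_swapFrom (t : ℕ) (a b : Fin N) (w : Fin m → Fin N) :
    swapFrom t a b (swapFrom t a b w) = w :=
  funext fun i => by unfold swapFrom; split_ifs <;> simp

theorem countLetterN_swapFrom {t j : ℕ} (hj : j ≤ t) (a b : Fin N) (w : Fin m → Fin N)
    (c : Fin N) : countLetterN m N (swapFrom t a b w) c j = countLetterN m N w c j :=
  countLetterN_congr c fun _ hi => if_pos (hi.trans_le hj)

theorem card_fiber_swapFrom_add (t : ℕ) (a b : Fin N) (w : Fin m → Fin N) (c : Fin N) :
    #{i | swapFrom t a b w i = c} + countLetterN m N w (Equiv.swap a b c) t =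
      #{i | w i = Equiv.swap a b c} + countLetterN m N w c t := by
  have hsuffix : #{i : Fin m | t ≤ (i : ℕ) ∧ swapFrom t a b w i = c} =
      #{i : Fin m | t ≤ (i : ℕ) ∧ w i = Equiv.swap a b c} := by
    refine congrArg card (filter_congr fun i _ => and_congr_right fun hi => ?_)
    rw [swapFrom, if_neg hi.not_gt, Equiv.swap_apply_eq_iff]
  rw [← countLetterN_add_card_filter_le_eq (swapFrom t a b w) c t,
    ← countLetterN_add_card_filter_le_eq w (Equiv.swap a b c) t, countLetterN_swapFrom le_rfl,
    hsuffix]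
  ring

variable (M : ℕ) (a b : Fin N)

-- `0` when `a` never leads `b` by `M`, as `sInf ∅ = 0`.
noncomputable def leadTime (w : Fin m → Fin N) : ℕ :=
  sInf {j | countLetterN m N w b j + M ≤ countLetterN m N w a j}

noncomputable def reflectAtLead (w : Fin m → Fin N) : Fin m → Fin N :=
  swapFrom (leadTime M a b w) a b w

variable {M a b} {w : Fin m → Fin N}

theorem not_lead_of_lt_leadTime {j : ℕ} (hj : j < leadTime M a b w) :
    ¬ countLetterN m N w b j + M ≤ countLetterN m N w a j :=
  fun hlead => Nat.notMem_of_lt_sInf hj (Set.mem_ofPred.2 hlead)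

variable (hw : ∃ j, countLetterN m N w b j + M ≤ countLetterN m N w a j)
include hw

theorem lead_leadTime :
    countLetterN m N w b (leadTime M a b w) + M ≤ countLetterN m N w a (leadTime M a b w) :=
  Nat.sInf_mem hw

theorem countLetterN_leadTime (hM : 0 < M) :
    countLetterN m N w a (leadTime M a b w) = countLetterN m N w b (leadTime M a b w) + M := by
  have hlead := lead_leadTime hw
  obtain ⟨t, ht⟩ : ∃ t, leadTime M a b w = t + 1 := by
    refine Nat.exists_eq_add_one.2 (Nat.pos_of_ne_zero fun h0 => ?_)
    rw [h0, countLetterN_zero, countLetterN_zero] at hlead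
    omega
  have hprev := not_lead_of_lt_leadTime (ht ▸ t.lt_succ_self : t < leadTime M a b w)
  rw [ht] at hlead ⊢
  have := countLetterN_succ_le w a t
  have := countLetterN_mono w b (Nat.le_add_right t 1)
  omega

theorem leadTime_reflectAtLead : leadTime M a b (reflectAtLead M a b w) = leadTime M a b w := by
  have hlead j (hj : j ≤ leadTime M a b w) :
      (countLetterN m N (reflectAtLead M a b w) b j + M ≤
        countLetterN m N (reflectAtLead M a b w) a j) ↔
      countLetterN m N w b j + M ≤ countLetterN m N w a j := by
    rw [reflectAtLead, countLetterN_swapFrom hj, countLetterN_swapFrom hj]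
  have hlead' := (hlead _ le_rfl).2 (lead_leadTime hw)
  refine le_antisymm (Nat.sInf_le hlead') (le_csInf ⟨_, hlead'⟩ fun j hj => not_lt.1 fun hlt =>
    not_lead_of_lt_leadTime hlt ((hlead j hlt.le).1 hj))

theorem reflectAtLead_reflectAtLead : reflectAtLead M a b (reflectAtLead M a b w) = w := by
  rw [reflectAtLead, leadTime_reflectAtLead hw, reflectAtLead, swapFrom_swapFrom]

theorem card_fiber_reflectAtLead {n : ℕ} (hM : 0 < M) (hab : a ≠ b)
    (hn : ∀ c, #{i | w i = c} = n) (c : Fin N) :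
    #{i | reflectAtLead M a b w i = c} = if c = a then n + M else if c = b then n - M else n := by
  have key := card_fiber_swapFrom_add (leadTime M a b w) a b w c
  have hlead := countLetterN_leadTime hw hM
  rw [hn] at key
  rw [reflectAtLead]
  split_ifs with hca hcb
  · subst hca; rw [Equiv.swap_apply_left] at key; omega
  · subst hcb; rw [Equiv.swap_apply_right] at key; omega
  · rw [Equiv.swap_apply_of_ne_of_ne hca hcb] at key; omega

end Reflection

theorem prod_ite_eq_mul_mul_pow {ι R : Type*} [Fintype ι] [DecidableEq ι] [CommMonoid R]
    {a b : ι} (hab : a ≠ b) (x y z : R) :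
    ∏ c, (if c = a then x else if c = b then y else z) = x * y * z ^ (Fintype.card ι - 2) := by
  have hb : b ∈ univ.erase a := mem_erase.2 ⟨hab.symm, mem_univ b⟩
  rw [← mul_prod_erase univ _ (mem_univ a), ← mul_prod_erase _ _ hb, ← mul_assoc,
    prod_congr rfl fun c hc => by
      rw [if_neg (ne_of_mem_erase (mem_of_mem_erase hc)), if_neg (ne_of_mem_erase hc)],
    prod_const, card_erase_of_mem hb, card_erase_of_mem (mem_univ a), Finset.card_univ,
    Nat.sub_sub, if_pos rfl, if_neg hab.symm, if_pos rfl]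

theorem card_mul_factorial_le_of_forall_lead {m N n M : ℕ} (hM : 0 < M) {a b : Fin N}
    {s : Finset (Fin m → Fin N)} (hs : ∀ w ∈ s, (∀ c, #{i | w i = c} = n) ∧
      ∃ j, countLetterN m N w b j + M ≤ countLetterN m N w a j) :
    #s * ((n - M)! * (n + M)! * n ! ^ (N - 2)) ≤ m ! := by
  rcases eq_or_ne a b with rfl | hab
  · obtain rfl : s = ∅ := eq_empty_of_forall_notMem fun w hw => by
      obtain ⟨-, j, hj⟩ := hs w hw
      omega
    simp
  set cnt : Fin N → ℕ := fun c => if c = a then n + M else if c = b then n - M else n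
  have hprod : ∏ c, (cnt c)! = (n - M)! * (n + M)! * n ! ^ (N - 2) := by
    simp only [cnt, apply_ite Nat.factorial]
    rw [prod_ite_eq_mul_mul_pow hab, Fintype.card_fin, mul_comm (n + M)!]
  rw [← hprod]
  refine le_trans (Nat.mul_le_mul_right _ (card_le_card_of_injOn (reflectAtLead M a b)
      (fun w hw => ?_) fun w₁ hw₁ w₂ hw₂ heq => ?_))
    ((card_filter_card_fiber_eq_mul_prod_factorial_le cnt).trans_eq
      (congrArg Nat.factorial (Fintype.card_fin m)))
  · obtain ⟨hword, hlead⟩ := hs w hw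
    simpa using card_fiber_reflectAtLead hlead hM hab hword
  · rw [← reflectAtLead_reflectAtLead (hs w₁ hw₁).2, heq,
      reflectAtLead_reflectAtLead (hs w₂ hw₂).2]

/-- For `N ≥ 2`, `n ≥ 1` and `1 ≤ M ≤ n`, the number of words `w ∈ W_n^{(N)}` with
`ρ∞(w, wst) ≥ (2M + 2)/n` is at most
`2·N²·(N·n)!/((n − M)!·(n + M)!·(n!)^{N−2})`. -/
theorem card_words_far_from_standard_le (N n M : ℕ) (hN : 2 ≤ N) (hn : 1 ≤ n) (hM : 1 ≤ M) :
    (Nat.card {w : Fin (N * n) → Fin N // IsWordN N n w ∧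
        ((2 * M + 2 : ℝ) / n) ≤ rhoInfN N n w (wstN N n (by omega))} : ℝ) ≤
      2 * (N : ℝ) ^ 2 * (Nat.factorial (N * n) : ℝ) /
        ((Nat.factorial (n - M) : ℝ) * (Nat.factorial (n + M) : ℝ) *
          (Nat.factorial n : ℝ) ^ (N - 2)) := by
  classical
  let far : Finset (Fin (N * n) → Fin N) :=
    {w | IsWordN N n w ∧ (2 * M + 2 : ℝ) / n ≤ rhoInfN N n w (wstN N n (by omega))}
  let lead (p : Fin N × Fin N) : Finset (Fin (N * n) → Fin N) :=
    {w ∈ far | ∃ j, countLetterN (N * n) N w p.2 j + M ≤ countLetterN (N * n) N w p.1 j}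
  have hcover : far ⊆ univ.biUnion lead := fun w hw => by
    obtain ⟨a, b, hlead⟩ := exists_lead_of_le_rhoInfN_wstN (by omega) hn (mem_filter.1 hw).2.2
    exact mem_biUnion.2 ⟨(a, b), mem_univ _, mem_filter.2 ⟨hw, hlead⟩⟩
  have hcount := calc
    #far * ((n - M)! * (n + M)! * n ! ^ (N - 2))
      ≤ ∑ p, #(lead p) * ((n - M)! * (n + M)! * n ! ^ (N - 2)) := by
        rw [← sum_mul]
        exact Nat.mul_le_mul_right _ ((card_le_card hcover).trans card_biUnion_le)
    _ ≤ ∑ _p : Fin N × Fin N, (N * n)! := sum_le_sum fun p _ =>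
        card_mul_factorial_le_of_forall_lead hM fun w hw =>
          ⟨(mem_filter.1 (mem_filter.1 hw).1).2.1, (mem_filter.1 hw).2⟩
    _ = N ^ 2 * (N * n)! := by simp [sq]
  rw [Nat.card_eq_fintype_card, Fintype.card_subtype, le_div_iff₀ (by positivity)]
  have hcount' := (Nat.cast_le (α := ℝ)).2 hcount
  push_cast at hcount'
  nlinarith [sq_nonneg (N : ℝ), Nat.factorial_pos (N * n)]
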